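/- arXiv:1308.4103 — 3 statements merged into one kernel-verified Lean document; each statement's English description precedes it below -/
import Mathlib

section
/- Let A be a normal n×n complex matrix with Cartesian decomposition A = A₁ + iA₂. Then for every index j (1 ≤ j ≤ n), (1/√2)·s_j(A₁ + A₂) ≤ s_j(A) ≤ s_j(|A₁| + |A₂|). -/
/-!
Normality of `A = A₁ + i A₂` says exactly that `A₁` and `A₂` commute, so the two Hermitian
matrices are diagonalised by one unitary `U`: `A₁ = U diag(a) U*`, `A₂ = U diag(b) U*` with `a, b`
real. As `r ↦ U diag(r) U*` is a ⋆-homomorphism, `AᴴA`, `(A₁ + A₂)²` and `(|A₁| + |A₂|)²` are the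
images of `a² + b²`, `(a + b)²` and `(|a| + |b|)²`, so their eigenvalues, the squared singular
values, are these tuples sorted. The entrywise inequalities `(a + b)² / 2 ≤ a² + b² ≤ (|a| + |b|)²`
survive sorting.
-/

open Matrix
open scoped ComplexOrder

/-- `singularValues X j` is the `(j+1)`-th largest singular value of `X`, i.e. the
decreasingly ordered square roots of the eigenvalues of `Xᴴ * X`. -/
noncomputable def singularValues {m : ℕ} (X : Matrix (Fin m) (Fin m) ℂ) : Fin m → ℝ :=
  fun j => Real.sqrt
    ((Matrix.isHermitian_conjTranspose_mul_self X).eigenvalues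
      (Tuple.sort (Matrix.isHermitian_conjTranspose_mul_self X).eigenvalues j.rev))

/-- `matAbs X = |X|` is the positive semidefinite square root of `Xᴴ * X`. -/
noncomputable def matAbs {m : ℕ} (X : Matrix (Fin m) (Fin m) ℂ) : Matrix (Fin m) (Fin m) ℂ :=
  (Matrix.posSemidef_conjTranspose_mul_self X).1.eigenvectorUnitary.1 *
    Matrix.diagonal ((↑) ∘ (Real.sqrt ·) ∘ (Matrix.posSemidef_conjTranspose_mul_self X).1.eigenvalues) *
    (star (Matrix.posSemidef_conjTranspose_mul_self X).1.eigenvectorUnitary : Matrix (Fin m) (Fin m) ℂ)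

/-- `dsum X Y = X ⊕ Y` is the block diagonal matrix with diagonal blocks `X` and `Y`. -/
noncomputable def dsum {m : ℕ} (X Y : Matrix (Fin m) (Fin m) ℂ) :
    Matrix (Fin (m + m)) (Fin (m + m)) ℂ :=
  Matrix.reindex finSumFinEquiv finSumFinEquiv (Matrix.fromBlocks X 0 0 Y)

/-- `matPosPart X = X⁺ = (|X| + X)/2`. -/
noncomputable def matPosPart {m : ℕ} (X : Matrix (Fin m) (Fin m) ℂ) : Matrix (Fin m) (Fin m) ℂ :=
  (2 : ℂ)⁻¹ • (matAbs X + X)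

/-- `matNegPart X = X⁻ = (|X| - X)/2`. -/
noncomputable def matNegPart {m : ℕ} (X : Matrix (Fin m) (Fin m) ℂ) : Matrix (Fin m) (Fin m) ℂ :=
  (2 : ℂ)⁻¹ • (matAbs X - X)

namespace Tuple

open Finset

variable {n : ℕ} {α : Type*} [LinearOrder α]

theorem card_filter_comp_sort_lt (f : Fin n → α) (a : α) :
    #{i | (f ∘ sort f) i < a} = #{i | f i < a} :=
  card_equiv (sort f) (by simp)

theorem card_filter_lt_eq_countP_map (f : Fin n → α) (a : α) :
    #{i | f i < a} = (univ.val.map f).countP (· < a) := by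
  rw [Multiset.countP_map]
  rfl

theorem comp_sort_le_comp_sort_of_card_filter_lt {f g : Fin n → α}
    (h : ∀ a, #{i | g i < a} ≤ #{i | f i < a}) (j : Fin n) :
    (f ∘ sort f) j ≤ (g ∘ sort g) j := by
  by_contra! hlt
  have hg := (lt_card_lt_iff_apply_lt_of_monotone (monotone_sort g)).2 hlt
  rw [card_filter_comp_sort_lt] at hg
  have hf : j < #{i | (f ∘ sort f) i < (f ∘ sort f) j} := by
    rw [card_filter_comp_sort_lt]
    exact hg.trans_le (h _)
  exact lt_irrefl _ ((lt_card_lt_iff_apply_lt_of_monotone (monotone_sort f)).1 hf)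

theorem comp_sort_le_comp_sort {f g : Fin n → α} (h : ∀ i, f i ≤ g i) :
    f ∘ sort f ≤ g ∘ sort g :=
  comp_sort_le_comp_sort_of_card_filter_lt fun _ ↦
    card_le_card fun i ↦ by simpa using (h i).trans_lt

theorem comp_sort_eq_of_map_eq {f g : Fin n → α} (h : univ.val.map f = univ.val.map g) :
    f ∘ sort f = g ∘ sort g := by
  have hcard (a : α) : #{i | f i < a} = #{i | g i < a} := by
    simp only [card_filter_lt_eq_countP_map, h]
  exact le_antisymm (comp_sort_le_comp_sort_of_card_filter_lt fun a ↦ (hcard a).ge)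
    (comp_sort_le_comp_sort_of_card_filter_lt fun a ↦ (hcard a).le)

theorem apply_comp_sort_le_comp_sort {β : Type*} [LinearOrder β] {φ : α → β} (hφ : Monotone φ)
    {f : Fin n → α} {g : Fin n → β} (h : ∀ i, φ (f i) ≤ g i) (j : Fin n) :
    φ ((f ∘ sort f) j) ≤ (g ∘ sort g) j := by
  have hsort : (φ ∘ f) ∘ sort (φ ∘ f) = φ ∘ f ∘ sort f :=
    (comp_sort_eq_comp_iff_monotone.mpr (hφ.comp (monotone_sort f))).symm
  have := comp_sort_le_comp_sort (f := φ ∘ f) h j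
  rwa [hsort] at this

end Tuple

section

open scoped ComplexStarModule

variable {E : Type*} [AddCommGroup E] [Module ℂ E] [StarAddMonoid E] [StarModule ℂ E]

theorem realPart_add_I_smul {x y : E} (hx : IsSelfAdjoint x) (hy : IsSelfAdjoint y) :
    (ℜ (x + Complex.I • y) : E) = x := by
  simp [realPart_I_smul, hx.coe_realPart, hy.imaginaryPart]

theorem imaginaryPart_add_I_smul {x y : E} (hx : IsSelfAdjoint x) (hy : IsSelfAdjoint y) :
    (ℑ (x + Complex.I • y) : E) = y := by
  simp [imaginaryPart_I_smul, hx.imaginaryPart, hy.coe_realPart]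

end

namespace OrthonormalBasis

variable {𝕜 n : Type*} [RCLike 𝕜] [Fintype n] [DecidableEq n]
variable (u : OrthonormalBasis n 𝕜 (EuclideanSpace 𝕜 n))

noncomputable def toUnitary : unitaryGroup n 𝕜 :=
  ⟨of fun i j ↦ u j i, (EuclideanSpace.basisFun n 𝕜).toMatrix_orthonormalBasis_mem_unitary u⟩

theorem toUnitary_mulVec_single (k : n) :
    (u.toUnitary : Matrix n n 𝕜) *ᵥ Pi.single k 1 = u k := by
  ext i
  simp [toUnitary]

theorem star_toUnitary_mulVec (k : n) :
    star (u.toUnitary : Matrix n n 𝕜) *ᵥ u k = Pi.single k 1 := by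
  rw [← toUnitary_mulVec_single, mulVec_mulVec, Unitary.coe_star_mul_self, one_mulVec]

noncomputable def conjDiagonal : (n → ℝ) →⋆ₐ[ℝ] Matrix n n 𝕜 :=
  (Unitary.conjStarAlgAut ℝ _ u.toUnitary : Matrix n n 𝕜 →⋆ₐ[ℝ] Matrix n n 𝕜).comp
    { toFun r := diagonal fun i ↦ (r i : 𝕜)
      map_one' := by simp
      map_mul' r s := by simp
      map_zero' := by simp
      map_add' r s := by simp
      commutes' c := by simp [algebraMap_eq_diagonal]
      map_star' r := by simp [star_eq_conjTranspose, diagonal_conjTranspose] }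

theorem conjDiagonal_apply (r : n → ℝ) :
    u.conjDiagonal r =
      u.toUnitary * diagonal (fun i ↦ (r i : 𝕜)) * star (u.toUnitary : Matrix n n 𝕜) :=
  rfl

theorem toEuclideanLin_conjDiagonal_apply (r : n → ℝ) (k : n) :
    toEuclideanLin (u.conjDiagonal r) (u k) = (r k : 𝕜) • u k := by
  rw [toLpLin_apply, conjDiagonal_apply, ← mulVec_mulVec, star_toUnitary_mulVec, ← mulVec_mulVec,
    diagonal_mulVec_single, ← smul_eq_mul, Pi.single_smul, mulVec_smul, toUnitary_mulVec_single]
  rfl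

theorem eq_conjDiagonal_iff {M : Matrix n n 𝕜} {r : n → ℝ} :
    M = u.conjDiagonal r ↔ ∀ k, toEuclideanLin M (u k) = (r k : 𝕜) • u k := by
  refine ⟨fun h k ↦ h ▸ u.toEuclideanLin_conjDiagonal_apply r k, fun h ↦ ?_⟩
  exact toEuclideanLin.injective <|
    u.toBasis.ext fun k ↦ by simp [h, toEuclideanLin_conjDiagonal_apply]

theorem conjTranspose_mul_self_conjDiagonal (r : n → ℝ) :
    (u.conjDiagonal r)ᴴ * u.conjDiagonal r = u.conjDiagonal (r * r) := by
  rw [← star_eq_conjTranspose, ← map_star, ← map_mul, star_trivial]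

open Polynomial in
theorem charpoly_conjDiagonal (r : n → ℝ) :
    (u.conjDiagonal r).charpoly = ∏ i, (X - C (r i : 𝕜)) := by
  rw [conjDiagonal_apply, charpoly_mul_comm, ← mul_assoc, Unitary.coe_star_mul_self, one_mul,
    charpoly_diagonal]

end OrthonormalBasis

namespace LinearMap.IsSymmetric

open Module.End

variable {𝕜 E : Type*} [RCLike 𝕜] [NormedAddCommGroup E] [InnerProductSpace 𝕜 E]

theorem apply_eq_re_smul_of_mem_eigenspace {T : E →ₗ[𝕜] E} (hT : T.IsSymmetric) {μ : 𝕜} {x : E}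
    (hx : x ∈ eigenspace T μ) : T x = (RCLike.re μ : 𝕜) • x := by
  rcases eq_or_ne x 0 with rfl | hx0
  · simp
  have hμ := hT.conj_eigenvalue_eq_self (hasEigenvalue_of_hasEigenvector ⟨hx, hx0⟩)
  rw [RCLike.conj_eq_iff_re.mp hμ]
  exact mem_eigenspace_iff.mp hx

theorem exists_orthonormalBasis_apply_eq_smul_of_commute [FiniteDimensional 𝕜 E] {n : ℕ}
    (hn : Module.finrank 𝕜 E = n) {S T : E →ₗ[𝕜] E} (hS : S.IsSymmetric) (hT : T.IsSymmetric)
    (hST : Commute S T) :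
    ∃ (u : OrthonormalBasis (Fin n) 𝕜 E) (a b : Fin n → ℝ),
      ∀ k, S (u k) = (a k : 𝕜) • u k ∧ T (u k) = (b k : 𝕜) • u k := by
  classical
  let V (i : 𝕜 × 𝕜) : Submodule 𝕜 E := eigenspace S i.2 ⊓ eigenspace T i.1
  have hint : DirectSum.IsInternal V := directSum_isInternal_of_commute hS hT hST
  -- `subordinateOrthonormalBasis` needs a finite index type: keep the nonzero `V i` only.
  have : Finite {i // V i ≠ ⊥} :=
    (WellFoundedGT.finite_ne_bot_of_iSupIndep hint.submodule_iSupIndep).to_subtype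
  have := Fintype.ofFinite {i // V i ≠ ⊥}
  replace hint := DirectSum.isInternal_ne_bot_iff.mpr hint
  have horth := (orthogonalFamily_eigenspace_inf_eigenspace hS hT).comp
    (Subtype.val_injective (p := fun i ↦ V i ≠ ⊥))
  let μ k := (hint.subordinateOrthonormalBasisIndex hn k horth).1
  refine ⟨hint.subordinateOrthonormalBasis hn horth, fun k ↦ RCLike.re (μ k).2,
    fun k ↦ RCLike.re (μ k).1, fun k ↦ ?_⟩
  obtain ⟨hSk, hTk⟩ :=
    Submodule.mem_inf.mp (hint.subordinateOrthonormalBasis_subordinate hn k horth)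
  exact ⟨hS.apply_eq_re_smul_of_mem_eigenspace hSk, hT.apply_eq_re_smul_of_mem_eigenspace hTk⟩

end LinearMap.IsSymmetric

namespace Matrix.IsHermitian

variable {𝕜 n : Type*} [RCLike 𝕜] [Fintype n] [DecidableEq n]

theorem exists_orthonormalBasis_eq_conjDiagonal_of_commute
    {A B : Matrix n n 𝕜} (hA : A.IsHermitian) (hB : B.IsHermitian) (hAB : Commute A B) :
    ∃ (u : OrthonormalBasis n 𝕜 (EuclideanSpace 𝕜 n)) (a b : n → ℝ),
      A = u.conjDiagonal a ∧ B = u.conjDiagonal b := by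
  obtain ⟨u, a, b, h⟩ :=
    (isSymmetric_toEuclideanLin_iff.mpr hA).exists_orthonormalBasis_apply_eq_smul_of_commute
      finrank_euclideanSpace (isSymmetric_toEuclideanLin_iff.mpr hB) (hAB.map (toLpLinAlgEquiv 2))
  let e := Fintype.equivFin n
  refine ⟨u.reindex e.symm, a ∘ e, b ∘ e, ?_, ?_⟩ <;>
    simp only [OrthonormalBasis.eq_conjDiagonal_iff, OrthonormalBasis.reindex_apply] <;>
    intro k
  exacts [(h (e k)).1, (h (e k)).2]

open Polynomial in
theorem map_eigenvalues_eq_of_eq_conjDiagonal {B : Matrix n n 𝕜}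
    (hB : B.IsHermitian) {u : OrthonormalBasis n 𝕜 (EuclideanSpace 𝕜 n)} {r : n → ℝ}
    (h : B = u.conjDiagonal r) : Finset.univ.val.map hB.eigenvalues = Finset.univ.val.map r := by
  have hroots := hB.roots_charpoly_eq_eigenvalues
  have hchar : B.charpoly = ∏ i, (X - C (r i : 𝕜)) := h ▸ u.charpoly_conjDiagonal r
  rw [hchar, roots_prod _ _ (Finset.prod_ne_zero_iff.mpr fun i _ ↦ X_sub_C_ne_zero _)] at hroots
  refine Multiset.map_injective (RCLike.ofReal_injective (K := 𝕜)) ?_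
  simpa [Multiset.map_map] using hroots.symm

end Matrix.IsHermitian

theorem matAbs_eq_cfc_sqrt {m : ℕ} (X : Matrix (Fin m) (Fin m) ℂ) :
    matAbs X = cfc Real.sqrt (Xᴴ * X) := by
  rw [(posSemidef_conjTranspose_mul_self X).1.cfc_eq, IsHermitian.cfc,
    Unitary.conjStarAlgAut_apply]
  rfl

open scoped MatrixOrder in
theorem matAbs_conjDiagonal {m : ℕ} (u : OrthonormalBasis (Fin m) ℂ (EuclideanSpace ℂ (Fin m)))
    (r : Fin m → ℝ) : matAbs (u.conjDiagonal r) = u.conjDiagonal |r| := by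
  rw [matAbs_eq_cfc_sqrt, ← cfcₙ_eq_cfc,
    ← CFC.sqrt_eq_real_sqrt _ (posSemidef_conjTranspose_mul_self _).nonneg]
  refine CFC.sqrt_unique ?_ (map_nonneg _ (abs_nonneg r))
  rw [← map_mul, u.conjTranspose_mul_self_conjDiagonal]
  congr 1
  ext i
  simp

theorem singularValues_eq_of_conjTranspose_mul_self_eq {m : ℕ} {X : Matrix (Fin m) (Fin m) ℂ}
    {u : OrthonormalBasis (Fin m) ℂ (EuclideanSpace ℂ (Fin m))} {r : Fin m → ℝ}
    (h : Xᴴ * X = u.conjDiagonal r) (j : Fin m) :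
    singularValues X j = √((r ∘ Tuple.sort r) j.rev) :=
  congrArg Real.sqrt <| congrFun (Tuple.comp_sort_eq_of_map_eq
    ((isHermitian_conjTranspose_mul_self X).map_eigenvalues_eq_of_eq_conjDiagonal h)) j.rev

/-- Let `A` be a normal `n×n` complex matrix with Cartesian decomposition `A = A₁ + iA₂`.
Then for every index `j`, `(1/√2)·s_j(A₁ + A₂) ≤ s_j(A) ≤ s_j(|A₁| + |A₂|)`. -/
theorem stmt_1 {n : ℕ} (A A₁ A₂ : Matrix (Fin n) (Fin n) ℂ)
    (h1 : A₁.IsHermitian) (h2 : A₂.IsHermitian) (hA : A = A₁ + Complex.I • A₂)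
    (hN : Aᴴ * A = A * Aᴴ) (j : Fin n) :
    (1 / Real.sqrt 2) * singularValues (A₁ + A₂) j ≤ singularValues A j ∧
    singularValues A j ≤ singularValues (matAbs A₁ + matAbs A₂) j := by
  have hre : (realPart A : Matrix (Fin n) (Fin n) ℂ) = A₁ := hA ▸ realPart_add_I_smul h1 h2
  have him : (imaginaryPart A : Matrix (Fin n) (Fin n) ℂ) = A₂ :=
    hA ▸ imaginaryPart_add_I_smul h1 h2
  have : IsStarNormal A := ⟨hN⟩
  have hgram : Aᴴ * A = A₁ * A₁ + A₂ * A₂ := by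
    rw [← star_eq_conjTranspose, star_mul_self_eq_realPart_sq_add_imaginaryPart_sq, hre, him]
  obtain ⟨u, a, b, rfl, rfl⟩ := h1.exists_orthonormalBasis_eq_conjDiagonal_of_commute h2
    (hre ▸ him ▸ Commute.realPart_imaginaryPart A)
  rw [← map_mul, ← map_mul, ← map_add] at hgram
  rw [matAbs_conjDiagonal, matAbs_conjDiagonal, ← map_add, ← map_add,
    singularValues_eq_of_conjTranspose_mul_self_eq hgram,
    singularValues_eq_of_conjTranspose_mul_self_eq (u.conjTranspose_mul_self_conjDiagonal _),
    singularValues_eq_of_conjTranspose_mul_self_eq (u.conjTranspose_mul_self_conjDiagonal _)]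
  constructor
  · have hle := Tuple.apply_comp_sort_le_comp_sort (φ := (· / 2)) (fun x y h ↦ by linarith)
      (f := (a + b) * (a + b)) (g := a * a + b * b)
      (fun k ↦ by simp only [Pi.add_apply, Pi.mul_apply]; nlinarith [sq_nonneg (a k - b k)]) j.rev
    rw [one_div_mul_eq_div, ← Real.sqrt_div' _ zero_le_two]
    exact Real.sqrt_le_sqrt hle
  · refine Real.sqrt_le_sqrt (Tuple.comp_sort_le_comp_sort (fun k ↦ ?_) _)
    simp only [Pi.add_apply, Pi.mul_apply, Pi.abs_apply]
    nlinarith [abs_mul_abs_self (a k), abs_mul_abs_self (b k), abs_nonneg (a k), abs_nonneg (b k)]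
end

section
/- Let A be a bounded linear operator on a complex Hilbert space, with Cartesian decomposition A = A₁ + iA₂ where A₁ = (A + A*)/2 and A₂ = (A − A*)/(2i). Then √2·‖A₁ + A₂‖ ≤ ‖A + iA*‖ ≤ 2·‖A₁ + A₂‖, where ‖·‖ denotes the operator norm. -/
/-! Since `A* = A₁ - i A₂`, one has `A + i A* = (1 + i)(A₁ + A₂)`, and `|1 + i| = √2`: the
left inequality is an equality, and the right one follows from `√2 ≤ 2`. -/

open Complex

lemma Complex.norm_one_add_I : ‖(1 + I : ℂ)‖ = √2 := by
  rw [norm_def, normSq_apply]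
  norm_num

lemma IsSelfAdjoint.add_I_smul_add_I_smul_star {E : Type*} [AddCommGroup E] [Module ℂ E]
    [StarAddMonoid E] [StarModule ℂ E] {a₁ a₂ : E} (h₁ : IsSelfAdjoint a₁)
    (h₂ : IsSelfAdjoint a₂) :
    (a₁ + I • a₂) + I • star (a₁ + I • a₂) = (1 + I) • (a₁ + a₂) := by
  rw [star_add, star_smul, h₁.star_eq, h₂.star_eq, Complex.star_def, conj_I]
  simp only [smul_add, smul_neg, smul_smul, I_mul_I, neg_smul, one_smul, add_smul]
  abel

/-- Let `A` be a bounded linear operator on a complex Hilbert space, with Cartesian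
decomposition `A = A₁ + iA₂`. Then `√2·‖A₁ + A₂‖ ≤ ‖A + iA*‖ ≤ 2·‖A₁ + A₂‖`. -/
theorem stmt_13 {H : Type*} [NormedAddCommGroup H] [InnerProductSpace ℂ H] [CompleteSpace H]
    (A A₁ A₂ : H →L[ℂ] H) (h1 : IsSelfAdjoint A₁) (h2 : IsSelfAdjoint A₂)
    (hA : A = A₁ + Complex.I • A₂) :
    Real.sqrt 2 * ‖A₁ + A₂‖ ≤ ‖A + Complex.I • ContinuousLinearMap.adjoint A‖ ∧
    ‖A + Complex.I • ContinuousLinearMap.adjoint A‖ ≤ 2 * ‖A₁ + A₂‖ := by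
  have hnorm : ‖A + I • ContinuousLinearMap.adjoint A‖ = √2 * ‖A₁ + A₂‖ := by
    rw [← ContinuousLinearMap.star_eq_adjoint, hA, h1.add_I_smul_add_I_smul_star h2,
      norm_smul, norm_one_add_I]
  have hsqrt : √2 ≤ 2 := Real.sqrt_le_self_iff.mpr (Or.inr one_le_two)
  exact ⟨hnorm.ge, hnorm ▸ mul_le_mul_of_nonneg_right hsqrt (norm_nonneg _)⟩
end

section
/- Let A be a bounded normal operator on a complex Hilbert space with Cartesian decomposition A = A₁ + iA₂. Then (1/√2)·‖A₁ + A₂‖ ≤ ‖A‖ ≤ ‖ |A₁| + |A₂| ‖, where |B| denotes the absolute value (continuous functional calculus applied to the absolute value function) of a self-adjoint operator B, and ‖·‖ is the operator norm. -/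
/-! For a normal `x = a + i b` with `a`, `b` self-adjoint, `a` and `b` commute, so
`‖x‖² = ‖x⋆x‖ = ‖a² + b²‖`. The lower bound is the parallelogram law
`(a + b)² ≤ (a + b)² + (a - b)² = 2 (a² + b²)` together with monotonicity of the norm on
positive elements. The upper bound uses `|a|² = a²` and, for positive `p`, `q`, the estimate
`p² ≤ ‖p‖ p ≤ ‖p + q‖ p`, which gives `|a|² + |b|² ≤ ‖|a| + |b|‖ (|a| + |b|)`. -/

open ComplexStarModule

section StarModule

variable {M : Type*} [AddCommGroup M] [Module ℂ M] [StarAddMonoid M] [StarModule ℂ M]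

lemma IsSelfAdjoint.realPart_add_I_smul {a b : M} (ha : IsSelfAdjoint a) (hb : IsSelfAdjoint b) :
    (ℜ (a + Complex.I • b) : M) = a := by
  simp [ha.coe_realPart, hb.imaginaryPart]

lemma IsSelfAdjoint.imaginaryPart_add_I_smul {a b : M} (ha : IsSelfAdjoint a)
    (hb : IsSelfAdjoint b) : (ℑ (a + Complex.I • b) : M) = b := by
  simp [ha.imaginaryPart, hb.coe_realPart]

end StarModule

section CStarAlgebra

variable {A : Type*} [CStarAlgebra A]

lemma IsStarNormal.norm_sq_eq_norm_realPart_mul_self_add_imaginaryPart_mul_self (x : A)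
    [IsStarNormal x] :
    ‖x‖ ^ 2 = ‖(ℜ x : A) * ℜ x + ℑ x * ℑ x‖ := by
  rw [← star_mul_self_eq_realPart_sq_add_imaginaryPart_sq, CStarRing.norm_star_mul_self, sq]

variable [PartialOrder A] [StarOrderedRing A]

lemma IsSelfAdjoint.norm_add_sq_le_two_mul {a b : A} (ha : IsSelfAdjoint a) (hb : IsSelfAdjoint b) :
    ‖a + b‖ ^ 2 ≤ 2 * ‖a * a + b * b‖ := by
  have hparallelogram : (a + b) * (a + b) + (a - b) * (a - b) = (2 : ℝ) • (a * a + b * b) := by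
    simp only [add_mul, mul_add, sub_mul, mul_sub, two_smul]
    abel
  calc ‖a + b‖ ^ 2 = ‖(a + b) * (a + b)‖ := (ha.add hb).norm_mul_self.symm
    _ ≤ ‖(2 : ℝ) • (a * a + b * b)‖ :=
      CStarAlgebra.norm_le_norm_of_nonneg_of_le (ha.add hb).mul_self_nonneg
        (hparallelogram ▸ le_add_of_nonneg_right (ha.sub hb).mul_self_nonneg)
    _ = 2 * ‖a * a + b * b‖ := by rw [norm_smul, Real.norm_two]

lemma mul_self_le_norm_smul_of_nonneg {b : A} (hb : 0 ≤ b) : b * b ≤ ‖b‖ • b := by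
  calc b * b = cfc (fun t : ℝ => t * t) b := by rw [cfc_mul .., cfc_id' ..]
    _ ≤ cfc (fun t : ℝ => ‖b‖ • t) b := cfc_mono fun t ht => by
        have ht0 : 0 ≤ t := spectrum_nonneg_of_nonneg hb ht
        have htb : t ≤ ‖b‖ :=
          (le_algebraMap_iff_spectrum_le hb.isSelfAdjoint).mp
            hb.isSelfAdjoint.le_algebraMap_norm_self t ht
        exact mul_le_mul_of_nonneg_right htb ht0
    _ = ‖b‖ • b := cfc_smul_id ‖b‖ b

lemma norm_mul_self_add_mul_self_le_norm_add_sq {b c : A} (hb : 0 ≤ b) (hc : 0 ≤ c) :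
    ‖b * b + c * c‖ ≤ ‖b + c‖ ^ 2 := by
  have hbb : b * b ≤ ‖b + c‖ • b := (mul_self_le_norm_smul_of_nonneg hb).trans <|
    smul_le_smul_of_nonneg_right
      (CStarAlgebra.norm_le_norm_of_nonneg_of_le hb (le_add_of_nonneg_right hc)) hb
  have hcc : c * c ≤ ‖b + c‖ • c := (mul_self_le_norm_smul_of_nonneg hc).trans <|
    smul_le_smul_of_nonneg_right
      (CStarAlgebra.norm_le_norm_of_nonneg_of_le hc (le_add_of_nonneg_left hb)) hc
  calc ‖b * b + c * c‖ ≤ ‖‖b + c‖ • (b + c)‖ :=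
      CStarAlgebra.norm_le_norm_of_nonneg_of_le
        (add_nonneg hb.isSelfAdjoint.mul_self_nonneg hc.isSelfAdjoint.mul_self_nonneg)
        (smul_add (‖b + c‖) b c ▸ add_le_add hbb hcc)
    _ = ‖b + c‖ ^ 2 := by rw [norm_smul, norm_norm, sq]

lemma IsStarNormal.norm_realPart_add_imaginaryPart_le (x : A) [IsStarNormal x] :
    ‖(ℜ x : A) + ℑ x‖ ≤ √2 * ‖x‖ := by
  rw [← Real.sqrt_sq (norm_nonneg x), ← Real.sqrt_mul zero_le_two]
  refine Real.le_sqrt_of_sq_le ?_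
  rw [IsStarNormal.norm_sq_eq_norm_realPart_mul_self_add_imaginaryPart_mul_self x]
  exact IsSelfAdjoint.norm_add_sq_le_two_mul (ℜ x).2 (ℑ x).2

lemma CFC.abs_eq_cfc_abs (a : A) (ha : IsSelfAdjoint a) :
    CFC.abs a = cfc (fun t : ℝ => |t|) a :=
  CFC.abs_eq_cfc_norm a ha

lemma IsStarNormal.norm_le_norm_abs_realPart_add_abs_imaginaryPart (x : A) [IsStarNormal x] :
    ‖x‖ ≤ ‖CFC.abs (ℜ x : A) + CFC.abs (ℑ x : A)‖ := by
  refine le_of_sq_le_sq ?_ (norm_nonneg _)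
  have habs (a : selfAdjoint A) : CFC.abs (a : A) * CFC.abs (a : A) = a * a := by
    rw [CFC.abs_mul_abs, a.2.star_eq]
  rw [IsStarNormal.norm_sq_eq_norm_realPart_mul_self_add_imaginaryPart_mul_self x, ← habs, ← habs]
  exact norm_mul_self_add_mul_self_le_norm_add_sq (CFC.abs_nonneg _) (CFC.abs_nonneg _)

end CStarAlgebra

/-- Let `A` be a bounded normal operator on a complex Hilbert space with Cartesian
decomposition `A = A₁ + iA₂`. Then `(1/√2)·‖A₁ + A₂‖ ≤ ‖A‖ ≤ ‖|A₁| + |A₂|‖`, where `|B|`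
is the continuous functional calculus of the self-adjoint operator `B` applied to `|·|`. -/
theorem stmt_15 {H : Type*} [NormedAddCommGroup H] [InnerProductSpace ℂ H] [CompleteSpace H]
    (A A₁ A₂ : H →L[ℂ] H) (h1 : IsSelfAdjoint A₁) (h2 : IsSelfAdjoint A₂)
    (hA : A = A₁ + Complex.I • A₂)
    (hN : A * ContinuousLinearMap.adjoint A = ContinuousLinearMap.adjoint A * A) :
    (1 / Real.sqrt 2) * ‖A₁ + A₂‖ ≤ ‖A‖ ∧
    ‖A‖ ≤ ‖cfc (fun t : ℝ => |t|) A₁ + cfc (fun t : ℝ => |t|) A₂‖ := by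
  have : IsStarNormal A := ⟨by rw [ContinuousLinearMap.star_eq_adjoint]; exact hN.symm⟩
  have hre : (ℜ A : H →L[ℂ] H) = A₁ := hA ▸ h1.realPart_add_I_smul h2
  have him : (ℑ A : H →L[ℂ] H) = A₂ := hA ▸ h1.imaginaryPart_add_I_smul h2
  constructor
  · rw [one_div, inv_mul_le_iff₀ (by positivity), ← hre, ← him]
    exact IsStarNormal.norm_realPart_add_imaginaryPart_le A
  · rw [← CFC.abs_eq_cfc_abs A₁ h1, ← CFC.abs_eq_cfc_abs A₂ h2, ← hre, ← him]
    exact IsStarNormal.norm_le_norm_abs_realPart_add_abs_imaginaryPart A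
end
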